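/- Consider the constant kernel K ≡ 2 and zero initial data. Let (f_t)_{t≥0} be a family of positive Radon measures on (0,∞) such that ∫ x f_t(dx) < ∞ for every t ≥ 0, the map t ↦ ∫ x φ(x) f_t(dx) is continuous for every continuous compactly supported φ : (0,∞) → ℝ, and for every continuously differentiable, compactly supported φ : [0,∞) → ℝ and every t ≥ 0: ∫ x φ(x) f_t(dx) = ∫_0^t ∬_{(0,∞)²} [(x+y)φ(x+y) − xφ(x) − yφ(y)] f_s(dx) f_s(dy) ds + t·φ(0). Then the Bernstein transform of f_t is uniquely determined: for all t ≥ 0 and λ > 0, ∫_{(0,∞)} (1 − e^{−λx}) f_t(dx) = √λ · tanh(√λ · t). -/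

import Mathlib

/-!
Let `B(t) = ∫ (1 - e^{-λx}) f_t(dx)`. Since `w(x) = 1 - e^{-λx}` satisfies
`w(x + y) - w(x) - w(y) = -w(x) w(y)`, the coagulation term of `w` factors as `-B(t)²`, so testing
the weak formulation with `x φ(x) = w(x)` formally gives `B(t) = λ t - ∫₀ᵗ B(s)² ds`. The test
function has to be truncated, `x φₙ(x) = w(x) χ(x / (n + 1))`; the truncated increments are bounded
by `C x y` uniformly in `n`, and dominated convergence applies thanks to the mass bound
`∫ x f_t(dx) ≤ t`, obtained by testing with the cutoffs themselves, whose increments are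
nonpositive. The function `√λ tanh(√λ t)` solves the same integral equation, and bounded solutions
of it are unique by a Gronwall-type iteration.
-/

open MeasureTheory Set ENNReal Real Filter
open scoped Topology NNReal

theorem AnalyticOnNhd.dslope {𝕜 E : Type*} [NontriviallyNormedField 𝕜] [NormedAddCommGroup E]
    [NormedSpace 𝕜 E] {f : 𝕜 → E} {s : Set 𝕜} (hf : AnalyticOnNhd 𝕜 f s) (a : 𝕜) :
    AnalyticOnNhd 𝕜 (dslope f a) s := by
  intro x hx
  rcases eq_or_ne x a with rfl | hxa
  · obtain ⟨p, hp⟩ := hf x hx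
    exact ⟨_, hp.has_fpower_series_dslope_fslope⟩
  · refine AnalyticAt.congr ?_ (dslope_eventuallyEq_slope_of_ne f hxa).symm
    simp_rw [funext (slope_def_module f a)]
    exact ((analyticAt_id.sub analyticAt_const).inv (sub_ne_zero.2 hxa)).smul
      ((hf x hx).sub analyticAt_const)

theorem Real.hasDerivAt_tanh (x : ℝ) : HasDerivAt tanh (1 - tanh x ^ 2) x := by
  have h := (hasDerivAt_sinh x).div (hasDerivAt_cosh x) (cosh_pos x).ne'
  rw [show sinh / cosh = tanh from funext fun y => (tanh_eq_sinh_div_cosh y).symm] at h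
  refine h.congr_deriv ?_
  rw [tanh_eq_sinh_div_cosh, div_pow, one_sub_div (pow_ne_zero 2 (cosh_pos x).ne')]
  ring

@[fun_prop]
theorem Real.continuous_tanh : Continuous tanh :=
  continuous_iff_continuousAt.2 fun x => (hasDerivAt_tanh x).continuousAt

theorem eqOn_zero_of_eq_integral_of_abs_le {d e : ℝ → ℝ} {A K t : ℝ} (hK : 0 ≤ K)
    (hA : ∀ u ∈ Icc 0 t, |d u| ≤ A) (he : ∀ s ∈ Icc 0 t, |e s| ≤ K * |d s|)
    (hd : ∀ u ∈ Icc 0 t, d u = ∫ s in 0..u, e s) : EqOn d 0 (Icc 0 t) := by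
  have iterate (m : ℕ) : ∀ u ∈ Icc 0 t, |d u| ≤ A * (K * u) ^ m / m.factorial := by
    induction m with
    | zero => simpa using hA
    | succ m ih =>
      intro u hu
      have hbound : ∀ s ∈ Ioc 0 u, ‖e s‖ ≤ K * (A * (K * s) ^ m / m.factorial) := fun s hs =>
        (he s ⟨hs.1.le, hs.2.trans hu.2⟩).trans
          (mul_le_mul_of_nonneg_left (ih s ⟨hs.1.le, hs.2.trans hu.2⟩) hK)
      calc |d u| = ‖∫ s in 0..u, e s‖ := by rw [hd u hu, Real.norm_eq_abs]
        _ ≤ ∫ s in 0..u, K * (A * (K * s) ^ m / m.factorial) :=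
          intervalIntegral.norm_integral_le_of_norm_le hu.1 (ae_of_all _ hbound)
            (Continuous.intervalIntegrable (by fun_prop) _ _)
        _ = ∫ s in 0..u, A * K ^ (m + 1) / m.factorial * s ^ m := by
          congr 1; ext s; ring
        _ = A * (K * u) ^ (m + 1) / (m + 1).factorial := by
          rw [intervalIntegral.integral_const_mul, integral_pow, Nat.factorial_succ]
          push_cast
          field_simp
          ring
  intro u hu
  have hlim : Tendsto (fun m : ℕ => A * ((K * u) ^ m / m.factorial)) atTop (𝓝 0) := by
    simpa using (FloorSemiring.tendsto_pow_div_factorial_atTop (K * u)).const_mul A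
  have : |d u| ≤ 0 := ge_of_tendsto hlim
    (Eventually.of_forall fun m => by simpa only [mul_div_assoc] using iterate m u hu)
  exact abs_nonpos_iff.1 this

theorem intervalIntegrable_and_tendsto_integral_of_abs_le {F : ℕ → ℝ → ℝ} {g : ℝ → ℝ}
    {a b C : ℝ} (hab : a ≤ b) (hF : ∀ n, IntervalIntegrable (F n) volume a b)
    (hC : ∀ n, ∀ s ∈ Ioc a b, |F n s| ≤ C)
    (hlim : ∀ s ∈ Ioc a b, Tendsto (fun n => F n s) atTop (𝓝 (g s))) :
    IntervalIntegrable g volume a b ∧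
      Tendsto (fun n => ∫ s in a..b, F n s) atTop (𝓝 (∫ s in a..b, g s)) := by
  have hmeas : AEStronglyMeasurable g (volume.restrict (Ioc a b)) :=
    aestronglyMeasurable_of_tendsto_ae atTop (fun n => (hF n).1.aestronglyMeasurable)
      ((ae_restrict_iff' measurableSet_Ioc).2 (ae_of_all _ hlim))
  have hgC : ∀ s ∈ Ioc a b, ‖g s‖ ≤ C := fun s hs =>
    le_of_tendsto' (hlim s hs).norm fun n => hC n s hs
  refine ⟨(intervalIntegrable_iff_integrableOn_Ioc_of_le hab).2
    (IntegrableOn.of_bound measure_Ioc_lt_top hmeas C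
      ((ae_restrict_iff' measurableSet_Ioc).2 (ae_of_all _ hgC))), ?_⟩
  rw [← uIoc_of_le hab] at hC hlim
  exact intervalIntegral.tendsto_integral_filter_of_dominated_convergence (fun _ => C)
    (Eventually.of_forall fun n => (hF n).def'.aestronglyMeasurable)
    (Eventually.of_forall fun n => ae_of_all _ (hC n)) intervalIntegrable_const
    (ae_of_all _ hlim)

theorem sigmaFinite_of_integrable_of_ae_ne_zero {α E : Type*} [MeasurableSpace α]
    [NormedAddCommGroup E] {μ : Measure α} {g : α → E} (hg : Integrable g μ)
    (hne : ∀ᵐ x ∂μ, g x ≠ 0) : SigmaFinite μ := by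
  have hfin := hg.aefinStronglyMeasurable
  have hcompl : μ.restrict hfin.sigmaFiniteSetᶜ = 0 := by
    rw [← ae_eq_bot, ← eventually_false_iff_eq_bot]
    filter_upwards [hfin.ae_eq_zero_compl, ae_restrict_of_ae hne] with x hx hne using hne hx
  have := hfin.sigmaFinite_restrict
  rw [← Measure.restrict_add_restrict_compl (μ := μ) hfin.measurableSet, hcompl, add_zero]
  infer_instance

noncomputable def cutoff (x : ℝ) : ℝ := smoothTransition (2 - x) * smoothTransition (2 + x)

theorem contDiff_cutoff {n : ℕ∞} : ContDiff ℝ n cutoff :=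
  (smoothTransition.contDiff.comp (contDiff_const.sub contDiff_id)).mul
    (smoothTransition.contDiff.comp (contDiff_const.add contDiff_id))

theorem hasCompactSupport_cutoff : HasCompactSupport cutoff := by
  refine HasCompactSupport.intro (isCompact_Icc (a := -2) (b := 2)) fun x hx => ?_
  rcases not_and_or.1 hx with hx | hx
  · simp [cutoff, smoothTransition.zero_of_nonpos (by linarith : 2 + x ≤ 0)]
  · simp [cutoff, smoothTransition.zero_of_nonpos (by linarith : 2 - x ≤ 0)]

theorem cutoff_eq_one {x : ℝ} (hx : |x| ≤ 1) : cutoff x = 1 := by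
  rw [abs_le] at hx
  simp [cutoff, smoothTransition.one_of_one_le (by linarith : 1 ≤ 2 - x),
    smoothTransition.one_of_one_le (by linarith : 1 ≤ 2 + x)]

theorem cutoff_nonneg (x : ℝ) : 0 ≤ cutoff x :=
  mul_nonneg (smoothTransition.nonneg _) (smoothTransition.nonneg _)

theorem cutoff_le_one (x : ℝ) : cutoff x ≤ 1 :=
  mul_le_one₀ (smoothTransition.le_one _) (smoothTransition.nonneg _) (smoothTransition.le_one _)

theorem exists_lipschitzWith_cutoff : ∃ K, LipschitzWith K cutoff :=
  ContDiff.lipschitzWith_of_hasCompactSupport hasCompactSupport_cutoff (contDiff_cutoff (n := 1))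
    one_ne_zero

theorem antitoneOn_cutoff : AntitoneOn cutoff (Ici 0) := by
  intro x hx y hy hxy
  have h1 : ∀ z ∈ Ici (0 : ℝ), cutoff z = smoothTransition (2 - z) := fun z hz => by
    simp [cutoff, smoothTransition.one_of_one_le (by linarith [mem_Ici.1 hz] : 1 ≤ 2 + z)]
  rw [h1 x hx, h1 y hy]
  exact smoothTransition.monotone (by linarith)

noncomputable def cutoffSeq (n : ℕ) (x : ℝ) : ℝ := cutoff ((n + 1 : ℝ)⁻¹ * x)

namespace cutoffSeq

variable (n : ℕ)

theorem contDiff {k : ℕ∞} : ContDiff ℝ k (cutoffSeq n) :=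
  contDiff_cutoff.comp (contDiff_const.mul contDiff_id)

@[fun_prop]
theorem continuous : Continuous (cutoffSeq n) := (contDiff n (k := 0)).continuous

theorem hasCompactSupport : HasCompactSupport (cutoffSeq n) :=
  hasCompactSupport_cutoff.comp_smul (G₀ := ℝ) (inv_ne_zero (by positivity))

theorem apply_zero : cutoffSeq n 0 = 1 := by simp [cutoffSeq, cutoff_eq_one]

theorem nonneg (x : ℝ) : 0 ≤ cutoffSeq n x := cutoff_nonneg _

theorem le_one (x : ℝ) : cutoffSeq n x ≤ 1 := cutoff_le_one _

theorem antitoneOn : AntitoneOn (cutoffSeq n) (Ici 0) := fun x hx y hy hxy =>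
  antitoneOn_cutoff (mem_Ici.2 (by have := mem_Ici.1 hx; positivity))
    (mem_Ici.2 (by have := mem_Ici.1 hy; positivity)) (by gcongr)

theorem eventually_eq_one (x : ℝ) : ∀ᶠ n in atTop, cutoffSeq n x = 1 := by
  filter_upwards [eventually_ge_atTop ⌈|x|⌉₊] with n hn
  refine cutoff_eq_one ?_
  rw [abs_mul, abs_inv, abs_of_pos (by positivity : (0 : ℝ) < n + 1),
    inv_mul_le_one₀ (by positivity)]
  linarith [Nat.le_ceil |x|, (Nat.cast_le (α := ℝ)).2 hn]

theorem tendsto_mul (g : ℝ → ℝ) (x : ℝ) :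
    Tendsto (fun n => g x * cutoffSeq n x) atTop (𝓝 (g x)) :=
  tendsto_const_nhds.congr' ((eventually_eq_one x).mono fun n hn => by simp [hn])

theorem lipschitzWith {K : ℝ≥0} (hK : LipschitzWith K cutoff) : LipschitzWith K (cutoffSeq n) := by
  refine (hK.comp (lipschitzWith_smul (n + 1 : ℝ)⁻¹)).weaken (mul_le_of_le_one_right' ?_)
  rw [← NNReal.coe_le_coe, coe_nnnorm, norm_inv, NNReal.coe_one]
  exact inv_le_one_of_one_le₀ (by rw [Real.norm_eq_abs]; exact le_abs.2 (.inl (by simp)))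

end cutoffSeq

noncomputable def bernsteinWeight (l x : ℝ) : ℝ := 1 - exp (-(l * x))

section bernsteinWeight

variable {l x : ℝ}

@[simp]
theorem bernsteinWeight_zero (l : ℝ) : bernsteinWeight l 0 = 0 := by simp [bernsteinWeight]

theorem bernsteinWeight_nonneg (hl : 0 ≤ l) (hx : 0 ≤ x) : 0 ≤ bernsteinWeight l x :=
  sub_nonneg.2 (exp_le_one_iff.2 (by nlinarith))

theorem bernsteinWeight_le_mul : bernsteinWeight l x ≤ l * x := by
  unfold bernsteinWeight
  linarith [add_one_le_exp (-(l * x))]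

theorem bernsteinWeight_lt_mul (h : l * x ≠ 0) : bernsteinWeight l x < l * x := by
  unfold bernsteinWeight
  linarith [add_one_lt_exp (neg_ne_zero.2 h)]

theorem bernsteinWeight_add_sub (l x y : ℝ) :
    bernsteinWeight l (x + y) - bernsteinWeight l x - bernsteinWeight l y =
      -(bernsteinWeight l x * bernsteinWeight l y) := by
  simp only [bernsteinWeight, mul_add, neg_add, exp_add]
  ring

@[fun_prop]
theorem continuous_bernsteinWeight (l : ℝ) : Continuous (bernsteinWeight l) := by
  unfold bernsteinWeight; fun_prop

theorem analyticOnNhd_bernsteinWeight (l : ℝ) : AnalyticOnNhd ℝ (bernsteinWeight l) univ := by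
  intro x _; unfold bernsteinWeight; fun_prop

theorem hasDerivAt_bernsteinWeight (l x : ℝ) :
    HasDerivAt (bernsteinWeight l) (l * exp (-(l * x))) x := by
  have := (((hasDerivAt_id x).const_mul l).neg.exp).const_sub 1
  exact this.congr_deriv (by simp [mul_comm])

theorem dslope_bernsteinWeight_zero (l : ℝ) : dslope (bernsteinWeight l) 0 0 = l := by
  simp [dslope_same, (hasDerivAt_bernsteinWeight l 0).deriv]

theorem abs_bernsteinWeight_mul_add_sub_le {χ : ℝ → ℝ} {K : ℝ≥0} (hl : 0 ≤ l)
    (hχ₀ : ∀ x, 0 ≤ χ x) (hχ₁ : ∀ x, χ x ≤ 1) (hK : LipschitzWith K χ) {x y : ℝ} (hx : 0 ≤ x)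
    (hy : 0 ≤ y) :
    |bernsteinWeight l (x + y) * χ (x + y) - bernsteinWeight l x * χ x -
        bernsteinWeight l y * χ y| ≤ 3 * max l K ^ 2 * (x * y) := by
  set a := max l K
  set w := bernsteinWeight l
  have ha : 0 ≤ a := hl.trans (le_max_left _ _)
  have hw : ∀ z, 0 ≤ z → 0 ≤ w z ∧ w z ≤ a * z := fun z hz =>
    ⟨bernsteinWeight_nonneg hl hz,
      bernsteinWeight_le_mul.trans (mul_le_mul_of_nonneg_right (le_max_left _ _) hz)⟩
  have hχ : ∀ z v, 0 ≤ v → |χ (z + v) - χ z| ≤ a * v := fun z v hv => by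
    have := hK.dist_le_mul (z + v) z
    rw [Real.dist_eq, Real.dist_eq, add_sub_cancel_left, abs_of_nonneg hv] at this
    exact this.trans (mul_le_mul_of_nonneg_right (le_max_right _ _) hv)
  have hsplit : w (x + y) * χ (x + y) - w x * χ x - w y * χ y =
      -(w x * w y) * χ (x + y) + w x * (χ (x + y) - χ x) + w y * (χ (y + x) - χ y) := by
    rw [add_comm y x]
    linear_combination χ (x + y) * bernsteinWeight_add_sub l x y
  have h₁ : |-(w x * w y) * χ (x + y)| ≤ a * x * (a * y) := by
    rw [abs_mul, abs_neg, abs_of_nonneg (mul_nonneg (hw x hx).1 (hw y hy).1), abs_of_nonneg (hχ₀ _)]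
    calc w x * w y * χ (x + y) ≤ a * x * (a * y) * 1 :=
          mul_le_mul (mul_le_mul (hw x hx).2 (hw y hy).2 (hw y hy).1 (by positivity))
            (hχ₁ _) (hχ₀ _) (by positivity)
      _ = a * x * (a * y) := mul_one _
  have h₂ (u v : ℝ) (hu : 0 ≤ u) (hv : 0 ≤ v) :
      |w u * (χ (u + v) - χ u)| ≤ a * u * (a * v) := by
    rw [abs_mul, abs_of_nonneg (hw u hu).1]
    exact mul_le_mul (hw u hu).2 (hχ u v hv) (abs_nonneg _) (by positivity)
  rw [hsplit]
  linarith [abs_add_three (-(w x * w y) * χ (x + y)) (w x * (χ (x + y) - χ x))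
    (w y * (χ (y + x) - χ y)), h₂ x y hx hy, h₂ y x hy hx]

noncomputable def bernsteinTestFun (l : ℝ) (n : ℕ) (x : ℝ) : ℝ :=
  dslope (bernsteinWeight l) 0 x * cutoffSeq n x

namespace bernsteinTestFun

variable (l : ℝ) (n : ℕ)

theorem contDiff : ContDiff ℝ 1 (bernsteinTestFun l n) :=
  ((analyticOnNhd_bernsteinWeight l).dslope 0).contDiff.mul (cutoffSeq.contDiff n)

theorem hasCompactSupport : HasCompactSupport (bernsteinTestFun l n) :=
  (cutoffSeq.hasCompactSupport n).mul_left

theorem apply_zero : bernsteinTestFun l n 0 = l := by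
  rw [bernsteinTestFun, dslope_bernsteinWeight_zero, cutoffSeq.apply_zero, mul_one]

theorem mul_self_eq (x : ℝ) :
    x * bernsteinTestFun l n x = bernsteinWeight l x * cutoffSeq n x := by
  simpa [bernsteinTestFun, mul_assoc] using
    congrArg (· * cutoffSeq n x) (sub_smul_dslope (bernsteinWeight l) 0 x)

end bernsteinTestFun

noncomputable def coagulationTerm (μ : Measure ℝ) (h : ℝ → ℝ) : ℝ :=
  ∫ p, (h (p.1 + p.2) - h p.1 - h p.2) ∂μ.prod μ

section coagulationTerm

variable {μ : Measure ℝ}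

theorem ae_prod_pos (hpos : ∀ᵐ x ∂μ, 0 < x) : ∀ᵐ p ∂μ.prod μ, 0 < p.1 ∧ 0 < p.2 :=
  (Measure.quasiMeasurePreserving_fst.ae hpos).and (Measure.quasiMeasurePreserving_snd.ae hpos)

theorem coagulationTerm_nonpos {h : ℝ → ℝ} (hpos : ∀ᵐ x ∂μ, 0 < x)
    (hsub : ∀ x y, 0 < x → 0 < y → h (x + y) ≤ h x + h y) : coagulationTerm μ h ≤ 0 :=
  integral_nonpos_of_ae <| (ae_prod_pos hpos).mono fun p hp => by
    show _ - _ - _ ≤ 0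
    linarith [hsub p.1 p.2 hp.1 hp.2]

theorem tendsto_coagulationTerm {h : ℕ → ℝ → ℝ} {g ρ : ℝ → ℝ} {C : ℝ} (hpos : ∀ᵐ x ∂μ, 0 < x)
    (hmeas : ∀ n, Measurable (h n)) (hρ : Integrable ρ μ)
    (hbound : ∀ n x y, 0 < x → 0 < y → |h n (x + y) - h n x - h n y| ≤ C * (ρ x * ρ y))
    (hlim : ∀ x, 0 < x → Tendsto (fun n => h n x) atTop (𝓝 (g x))) :
    Tendsto (fun n => coagulationTerm μ (h n)) atTop (𝓝 (coagulationTerm μ g)) := by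
  refine tendsto_integral_of_dominated_convergence (fun p => C * (ρ p.1 * ρ p.2))
    (fun n => by have := hmeas n; fun_prop) ((hρ.mul_prod hρ).const_mul C)
    (fun n => (ae_prod_pos hpos).mono fun p hp => hbound n p.1 p.2 hp.1 hp.2)
    ((ae_prod_pos hpos).mono fun p hp => ?_)
  exact ((hlim _ (add_pos hp.1 hp.2)).sub (hlim _ hp.1)).sub (hlim _ hp.2)

variable [SFinite μ]

theorem abs_coagulationTerm_le {h ρ : ℝ → ℝ} {C : ℝ} (hpos : ∀ᵐ x ∂μ, 0 < x)
    (hρ : Integrable ρ μ)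
    (hbound : ∀ x y, 0 < x → 0 < y → |h (x + y) - h x - h y| ≤ C * (ρ x * ρ y)) :
    |coagulationTerm μ h| ≤ C * (∫ x, ρ x ∂μ) ^ 2 := by
  have := norm_integral_le_of_norm_le (f := fun p => h (p.1 + p.2) - h p.1 - h p.2)
    ((hρ.mul_prod hρ).const_mul C)
    ((ae_prod_pos hpos).mono fun p hp => hbound p.1 p.2 hp.1 hp.2)
  rwa [integral_const_mul, integral_prod_mul, ← sq] at this

theorem coagulationTerm_bernsteinWeight (l : ℝ) :
    coagulationTerm μ (bernsteinWeight l) = -(∫ x, bernsteinWeight l x ∂μ) ^ 2 := by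
  simp_rw [coagulationTerm, bernsteinWeight_add_sub, integral_neg, integral_prod_mul, sq]

end coagulationTerm

theorem tendsto_integral_mul_cutoffSeq {μ : Measure ℝ} {g : ℝ → ℝ} (hg : Integrable g μ) :
    Tendsto (fun n => ∫ x, g x * cutoffSeq n x ∂μ) atTop (𝓝 (∫ x, g x ∂μ)) := by
  refine tendsto_integral_of_dominated_convergence (fun x => ‖g x‖)
    (fun n => hg.aestronglyMeasurable.mul (cutoffSeq.continuous n).aestronglyMeasurable)
    hg.norm (fun n => ae_of_all _ fun x => ?_) (ae_of_all _ (cutoffSeq.tendsto_mul g))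
  rw [norm_mul, Real.norm_of_nonneg (cutoffSeq.nonneg n x)]
  exact mul_le_of_le_one_right (norm_nonneg _) (cutoffSeq.le_one n x)

noncomputable def bernsteinTransform (μ : Measure ℝ) (l : ℝ) : ℝ := ∫ x, bernsteinWeight l x ∂μ

section bernsteinTransform

variable {μ : Measure ℝ} {l : ℝ}

theorem integrable_bernsteinWeight (hpos : ∀ᵐ x ∂μ, 0 < x) (hint : Integrable (fun x => x) μ)
    (hl : 0 ≤ l) : Integrable (bernsteinWeight l) μ :=
  (hint.const_mul l).mono' (continuous_bernsteinWeight l).aestronglyMeasurable <|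
    hpos.mono fun x hx => by
      rw [Real.norm_of_nonneg (bernsteinWeight_nonneg hl hx.le)]
      exact bernsteinWeight_le_mul

theorem bernsteinTransform_nonneg (hpos : ∀ᵐ x ∂μ, 0 < x) (hl : 0 ≤ l) :
    0 ≤ bernsteinTransform μ l :=
  integral_nonneg_of_ae (hpos.mono fun _ hx => bernsteinWeight_nonneg hl hx.le)

theorem bernsteinTransform_le_mul_integral (hpos : ∀ᵐ x ∂μ, 0 < x)
    (hint : Integrable (fun x => x) μ) (hl : 0 ≤ l) :
    bernsteinTransform μ l ≤ l * ∫ x, x ∂μ := by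
  rw [← integral_const_mul]
  exact integral_mono (integrable_bernsteinWeight hpos hint hl) (hint.const_mul l)
    fun _ => bernsteinWeight_le_mul

theorem bernsteinTransform_lt_mul_integral (hpos : ∀ᵐ x ∂μ, 0 < x)
    (hint : Integrable (fun x => x) μ) (hl : 0 < l) (hμ : μ ≠ 0) :
    bernsteinTransform μ l < l * ∫ x, x ∂μ := by
  by_contra hle
  have hgap_int : Integrable (fun x => l * x - bernsteinWeight l x) μ :=
    (hint.const_mul l).sub (integrable_bernsteinWeight hpos hint hl.le)
  have hgap_nonneg : 0 ≤ᵐ[μ] fun x => l * x - bernsteinWeight l x :=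
    ae_of_all _ fun _ => sub_nonneg.2 bernsteinWeight_le_mul
  have hgap : ∫ x, (l * x - bernsteinWeight l x) ∂μ = 0 := by
    refine le_antisymm ?_ (integral_nonneg_of_ae hgap_nonneg)
    rw [integral_sub (hint.const_mul l) (integrable_bernsteinWeight hpos hint hl.le),
      integral_const_mul]
    exact sub_nonpos.2 (not_lt.1 hle)
  refine hμ (ae_eq_bot.1 (eventually_false_iff_eq_bot.1 ?_))
  filter_upwards [(integral_eq_zero_iff_of_nonneg_ae hgap_nonneg hgap_int).1 hgap, hpos]
    with x hx hxpos
  exact (sub_pos.2 (bernsteinWeight_lt_mul (mul_pos hl hxpos).ne')).ne' hx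

end bernsteinTransform

theorem sqrt_mul_tanh_eq_sub_integral_sq {l : ℝ} (hl : 0 ≤ l) (u : ℝ) :
    √l * tanh (√l * u) = l * u - ∫ s in 0..u, (√l * tanh (√l * s)) ^ 2 := by
  set G : ℝ → ℝ := fun s => √l * tanh (√l * s)
  have hG : ∀ s, HasDerivAt G (l - G s ^ 2) s := fun s => by
    have := ((hasDerivAt_tanh _).comp s ((hasDerivAt_id s).const_mul √l)).const_mul √l
    refine this.congr_deriv ?_
    simp only [G, id]
    linear_combination sq_sqrt hl
  have hG2 : IntervalIntegrable (fun s => G s ^ 2) volume 0 u :=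
    Continuous.intervalIntegrable (by fun_prop) _ _
  have hftc := intervalIntegral.integral_eq_sub_of_hasDerivAt (fun s _ => hG s)
    (intervalIntegrable_const.sub hG2)
  rw [intervalIntegral.integral_sub intervalIntegrable_const hG2, intervalIntegral.integral_const,
    smul_eq_mul, sub_zero] at hftc
  have hG0 : G 0 = 0 := by simp [G]
  linarith

theorem eqOn_sqrt_mul_tanh_of_eq_sub_integral_sq {B : ℝ → ℝ} {l t C : ℝ} (hl : 0 ≤ l)
    (hB : ∀ u ∈ Icc 0 t, |B u| ≤ C) (hint : IntervalIntegrable (fun s => B s ^ 2) volume 0 t)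
    (heq : ∀ u ∈ Icc 0 t, B u = l * u - ∫ s in 0..u, B s ^ 2) :
    EqOn B (fun u => √l * tanh (√l * u)) (Icc 0 t) := by
  set G : ℝ → ℝ := fun u => √l * tanh (√l * u)
  have hG : ∀ u, |G u| ≤ √l := fun u => by
    simpa [G, abs_mul, abs_of_nonneg (sqrt_nonneg l)]
      using mul_le_mul_of_nonneg_left (abs_tanh_lt_one (√l * u)).le (sqrt_nonneg l)
  have hB' : ∀ u ∈ Icc 0 t, |B u| ≤ |C| := fun u hu => (hB u hu).trans (le_abs_self C)
  have hdiff := eqOn_zero_of_eq_integral_of_abs_le (d := B - G) (e := fun s => G s ^ 2 - B s ^ 2)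
    (A := |C| + √l) (K := |C| + √l) (t := t) (by positivity) (fun u hu => ?_) (fun u hu => ?_)
    (fun u hu => ?_)
  · exact fun u hu => sub_eq_zero.1 (hdiff hu)
  · exact (abs_sub _ _).trans (add_le_add (hB' u hu) (hG u))
  · rw [show G u ^ 2 - B u ^ 2 = (G u + B u) * -(B - G) u by simp; ring, abs_mul, abs_neg]
    gcongr
    exact (abs_add_le _ _).trans (by linarith [hB' u hu, hG u])
  · have hG2 : IntervalIntegrable (fun s => G s ^ 2) volume 0 u :=
      Continuous.intervalIntegrable (by fun_prop) _ _
    have hB2 : IntervalIntegrable (fun s => B s ^ 2) volume 0 u :=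
      hint.mono_set (uIcc_subset_uIcc left_mem_uIcc (mem_uIcc_of_le hu.1 hu.2))
    have hGu : G u = l * u - ∫ s in 0..u, G s ^ 2 := sqrt_mul_tanh_eq_sub_integral_sq hl u
    rw [intervalIntegral.integral_sub hG2 hB2, Pi.sub_apply, heq u hu, hGu]
    ring

/-- The weak formulation of the Smoluchowski equation with kernel `K ≡ 2`, zero initial data and
a unit flux of dust entering at `0`, written for the test functions `x ↦ x φ x`. -/
structure IsFluxSolution (f : ℝ → Measure ℝ) : Prop where
  ae_pos : ∀ t ≥ (0 : ℝ), ∀ᵐ x ∂f t, 0 < x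
  integrable_id : ∀ t ≥ (0 : ℝ), Integrable (fun x => x) (f t)
  weak : ∀ φ : ℝ → ℝ, ContDiff ℝ 1 φ → HasCompactSupport φ → ∀ t ≥ (0 : ℝ),
    ∫ x, x * φ x ∂f t = (∫ s in 0..t, coagulationTerm (f s) fun x => x * φ x) + t * φ 0

namespace IsFluxSolution

variable {f : ℝ → Measure ℝ} {t l : ℝ}

theorem sigmaFinite (hf : IsFluxSolution f) (ht : 0 ≤ t) : SigmaFinite (f t) :=
  sigmaFinite_of_integrable_of_ae_ne_zero (hf.integrable_id t ht)
    ((hf.ae_pos t ht).mono fun _ hx => hx.ne')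

theorem integral_mul_le_of_subadditive (hf : IsFluxSolution f) {φ : ℝ → ℝ}
    (hφ : ContDiff ℝ 1 φ) (hφc : HasCompactSupport φ)
    (hsub : ∀ x y, 0 < x → 0 < y → (x + y) * φ (x + y) ≤ x * φ x + y * φ y) (ht : 0 ≤ t) :
    ∫ x, x * φ x ∂f t ≤ t * φ 0 := by
  rw [hf.weak φ hφ hφc t ht, add_le_iff_nonpos_left]
  have := intervalIntegral.integral_nonneg_of_ae_restrict ht
    (f := fun s => -coagulationTerm (f s) fun x => x * φ x) (μ := volume)
    ((ae_restrict_iff' measurableSet_Icc).2 (ae_of_all _ fun s hs =>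
      neg_nonneg.2 (coagulationTerm_nonpos (hf.ae_pos s hs.1) hsub)))
  rwa [intervalIntegral.integral_neg, neg_nonneg] at this

theorem integral_id_le (hf : IsFluxSolution f) (ht : 0 ≤ t) : ∫ x, x ∂f t ≤ t := by
  have hsub (n : ℕ) (x y : ℝ) (hx : 0 < x) (hy : 0 < y) :
      (x + y) * cutoffSeq n (x + y) ≤ x * cutoffSeq n x + y * cutoffSeq n y := by
    have hanti := cutoffSeq.antitoneOn n
    have h₁ := hanti (mem_Ici.2 hx.le) (mem_Ici.2 (by positivity)) (le_add_of_nonneg_right hy.le)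
    have h₂ := hanti (mem_Ici.2 hy.le) (mem_Ici.2 (by positivity)) (le_add_of_nonneg_left hx.le)
    nlinarith
  refine le_of_tendsto' (tendsto_integral_mul_cutoffSeq (hf.integrable_id t ht)) fun n => ?_
  simpa [cutoffSeq.apply_zero] using hf.integral_mul_le_of_subadditive (cutoffSeq.contDiff n)
    (cutoffSeq.hasCompactSupport n) (hsub n) ht

theorem bernsteinTransform_le (hf : IsFluxSolution f) (hl : 0 ≤ l) (ht : 0 ≤ t) :
    bernsteinTransform (f t) l ≤ l * t :=
  (bernsteinTransform_le_mul_integral (hf.ae_pos t ht) (hf.integrable_id t ht) hl).trans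
    (mul_le_mul_of_nonneg_left (hf.integral_id_le ht) hl)

theorem bernsteinTransform_lt (hf : IsFluxSolution f) (hl : 0 < l) (ht : 0 < t) :
    bernsteinTransform (f t) l < l * t := by
  by_cases h0 : f t = 0
  · simpa [bernsteinTransform, h0] using mul_pos hl ht
  · exact (bernsteinTransform_lt_mul_integral (hf.ae_pos t ht.le) (hf.integrable_id t ht.le) hl
      h0).trans_le (mul_le_mul_of_nonneg_left (hf.integral_id_le ht.le) hl.le)

theorem abs_coagulationTerm_bernsteinWeight_mul_cutoffSeq_le (hf : IsFluxSolution f) (hl : 0 ≤ l)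
    {K : ℝ≥0} (hK : LipschitzWith K cutoff) (n : ℕ) {s : ℝ} (hs : 0 ≤ s) (hst : s ≤ t) :
    |coagulationTerm (f s) fun x => bernsteinWeight l x * cutoffSeq n x| ≤
      3 * max l K ^ 2 * t ^ 2 := by
  have := hf.sigmaFinite hs
  refine (abs_coagulationTerm_le (hf.ae_pos s hs) (hf.integrable_id s hs) fun x y hx hy =>
    abs_bernsteinWeight_mul_add_sub_le hl (cutoffSeq.nonneg n) (cutoffSeq.le_one n)
      (cutoffSeq.lipschitzWith n hK) hx.le hy.le).trans ?_
  have hmass_nonneg : 0 ≤ ∫ x, x ∂f s :=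
    integral_nonneg_of_ae ((hf.ae_pos s hs).mono fun _ hx => hx.le)
  gcongr
  exact (hf.integral_id_le hs).trans hst

theorem tendsto_coagulationTerm_bernsteinWeight_mul_cutoffSeq (hf : IsFluxSolution f)
    (hl : 0 ≤ l) {K : ℝ≥0} (hK : LipschitzWith K cutoff) {s : ℝ} (hs : 0 ≤ s) :
    Tendsto (fun n => coagulationTerm (f s) fun x => bernsteinWeight l x * cutoffSeq n x) atTop
      (𝓝 (-bernsteinTransform (f s) l ^ 2)) := by
  have := hf.sigmaFinite hs
  rw [bernsteinTransform, ← coagulationTerm_bernsteinWeight]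
  exact tendsto_coagulationTerm (hf.ae_pos s hs)
    (fun n => ((continuous_bernsteinWeight l).mul (cutoffSeq.continuous n)).measurable)
    (hf.integrable_id s hs)
    (fun n x y hx hy => abs_bernsteinWeight_mul_add_sub_le hl (cutoffSeq.nonneg n)
      (cutoffSeq.le_one n) (cutoffSeq.lipschitzWith n hK) hx.le hy.le)
    (fun x _ => cutoffSeq.tendsto_mul _ x)

theorem bernsteinTransform_eq_sub_integral (hf : IsFluxSolution f) (hl : 0 < l) (ht : 0 ≤ t) :
    IntervalIntegrable (fun s => bernsteinTransform (f s) l ^ 2) volume 0 t ∧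
      bernsteinTransform (f t) l = l * t - ∫ s in 0..t, bernsteinTransform (f s) l ^ 2 := by
  rcases ht.eq_or_lt with rfl | ht
  · have := le_antisymm (by simpa using hf.bernsteinTransform_le hl.le le_rfl)
      (bernsteinTransform_nonneg (hf.ae_pos 0 le_rfl) hl.le)
    simp [this]
  obtain ⟨K, hK⟩ := exists_lipschitzWith_cutoff
  set Λ : ℕ → ℝ → ℝ := fun n s =>
    coagulationTerm (f s) fun x => bernsteinWeight l x * cutoffSeq n x
  have hweak (n : ℕ) :
      ∫ x, bernsteinWeight l x * cutoffSeq n x ∂f t = (∫ s in 0..t, Λ n s) + t * l := by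
    simpa only [bernsteinTestFun.mul_self_eq, bernsteinTestFun.apply_zero] using
      hf.weak _ (bernsteinTestFun.contDiff l n) (bernsteinTestFun.hasCompactSupport l n) t ht.le
  have hlhs := tendsto_integral_mul_cutoffSeq
    (integrable_bernsteinWeight (hf.ae_pos t ht.le) (hf.integrable_id t ht.le) hl.le)
  -- Nothing is known about measurability in time: if the time integrals were eventually the junk
  -- value `0`, the weak formulation would force `bernsteinTransform (f t) l = l * t`.
  have hfreq : ∃ᶠ n in atTop, IntervalIntegrable (Λ n) volume 0 t := by
    by_contra h
    rw [not_frequently] at h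
    have hjunk :
        Tendsto (fun n => ∫ x, bernsteinWeight l x * cutoffSeq n x ∂f t) atTop (𝓝 (t * l)) :=
      tendsto_const_nhds.congr' (h.mono fun n hn => by
        dsimp only; rw [hweak n, intervalIntegral.integral_undef hn, zero_add])
    exact (hf.bernsteinTransform_lt hl ht).ne
      (by rw [bernsteinTransform, tendsto_nhds_unique hlhs hjunk, mul_comm])
  obtain ⟨φ, hφ, hφint⟩ := extraction_of_frequently_atTop hfreq
  obtain ⟨hint, hlim⟩ := intervalIntegrable_and_tendsto_integral_of_abs_le ht.le hφint
    (fun n s hs =>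
      hf.abs_coagulationTerm_bernsteinWeight_mul_cutoffSeq_le hl.le hK (φ n) hs.1.le hs.2)
    (fun s hs => (hf.tendsto_coagulationTerm_bernsteinWeight_mul_cutoffSeq hl.le hK hs.1.le).comp
      hφ.tendsto_atTop)
  refine ⟨by convert hint.neg using 1; ext s; simp, ?_⟩
  have := tendsto_nhds_unique (hlhs.comp hφ.tendsto_atTop)
    ((hlim.add_const (t * l)).congr fun k => (hweak (φ k)).symm)
  rw [bernsteinTransform, this, intervalIntegral.integral_neg]
  ring

theorem bernsteinTransform_eq_sqrt_mul_tanh (hf : IsFluxSolution f) (hl : 0 < l) (ht : 0 ≤ t) :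
    bernsteinTransform (f t) l = √l * tanh (√l * t) :=
  eqOn_sqrt_mul_tanh_of_eq_sub_integral_sq (B := fun s => bernsteinTransform (f s) l) (C := l * t)
    hl.le (fun u hu => by
      rw [abs_of_nonneg (bernsteinTransform_nonneg (hf.ae_pos u hu.1) hl.le)]
      exact (hf.bernsteinTransform_le hl.le hu.1).trans (mul_le_mul_of_nonneg_left hu.2 hl.le))
    (hf.bernsteinTransform_eq_sub_integral hl ht).1
    (fun u hu => (hf.bernsteinTransform_eq_sub_integral hl hu.1).2) ⟨ht, le_rfl⟩

end IsFluxSolution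

theorem IsFluxSolution.of_restrict_Ioi (f : ℝ → Measure ℝ)
    (hpos : ∀ t ≥ (0:ℝ), (f t) (Iic 0) = 0)
    (hmom : ∀ t ≥ (0:ℝ), (∫⁻ x in Ioi (0:ℝ), ENNReal.ofReal x ∂(f t)) < ∞)
    (heq : ∀ φ : ℝ → ℝ, ContDiff ℝ 1 φ → HasCompactSupport φ →
      ∀ t ≥ (0:ℝ),
        (∫ x in Ioi (0:ℝ), x * φ x ∂(f t))
          = (∫ s in (0:ℝ)..t,
              ∫ p in (Ioi (0:ℝ)) ×ˢ (Ioi (0:ℝ)),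
                ((p.1 + p.2) * φ (p.1 + p.2) - p.1 * φ p.1 - p.2 * φ p.2)
                  ∂((f s).prod (f s)))
            + t * φ 0) :
    IsFluxSolution f := by
  have hae : ∀ t ≥ (0:ℝ), ∀ᵐ x ∂f t, 0 < x := fun t ht => by
    rw [ae_iff]
    simp only [not_lt]
    exact hpos t ht
  have hres : ∀ t ≥ (0:ℝ), (f t).restrict (Ioi 0) = f t := fun t ht =>
    Measure.restrict_eq_self_of_ae_mem (hae t ht)
  have hint : ∀ t ≥ (0:ℝ), Integrable (fun x => x) (f t) := fun t ht => by
    have := (hmom t ht).ne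
    rw [hres t ht] at this
    exact (lintegral_ofReal_ne_top_iff_integrable aestronglyMeasurable_id
      ((hae t ht).mono fun _ hx => hx.le)).1 this
  refine ⟨hae, hint, fun φ hφ hφc t ht => ?_⟩
  rw [← hres t ht, heq φ hφ hφc t ht]
  congr 1
  refine intervalIntegral.integral_congr fun s hs => ?_
  have hs0 : 0 ≤ s := (uIcc_of_le ht ▸ hs).1
  have := sigmaFinite_of_integrable_of_ae_ne_zero (hint s hs0) ((hae s hs0).mono fun _ hx => hx.ne')
  simp only [coagulationTerm]
  rw [← Measure.prod_restrict, hres s hs0]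

theorem IsFluxSolution.lintegral_ofReal_bernsteinWeight {f : ℝ → Measure ℝ} (hf : IsFluxSolution f)
    {l t : ℝ} (hl : 0 ≤ l) (ht : 0 ≤ t) :
    ∫⁻ x in Ioi 0, ENNReal.ofReal (1 - exp (-(l * x))) ∂f t =
      ENNReal.ofReal (bernsteinTransform (f t) l) := by
  rw [Measure.restrict_eq_self_of_ae_mem (s := Ioi 0) (hf.ae_pos t ht), bernsteinTransform,
    ofReal_integral_eq_lintegral_ofReal
      (integrable_bernsteinWeight (hf.ae_pos t ht) (hf.integrable_id t ht) hl)
      ((hf.ae_pos t ht).mono fun _ hx => bernsteinWeight_nonneg hl hx.le)]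
  rfl

theorem constant_kernel_flux_solution_bernstein_transform_general
    (f : ℝ → Measure ℝ)
    (hpos : ∀ t ≥ (0:ℝ), (f t) (Iic 0) = 0)
    (hmom : ∀ t ≥ (0:ℝ), (∫⁻ x in Ioi (0:ℝ), ENNReal.ofReal x ∂(f t)) < ∞)
    (heq : ∀ φ : ℝ → ℝ, ContDiff ℝ 1 φ → HasCompactSupport φ →
      ∀ t ≥ (0:ℝ),
        (∫ x in Ioi (0:ℝ), x * φ x ∂(f t))
          = (∫ s in (0:ℝ)..t,
              ∫ p in (Ioi (0:ℝ)) ×ˢ (Ioi (0:ℝ)),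
                ((p.1 + p.2) * φ (p.1 + p.2) - p.1 * φ p.1 - p.2 * φ p.2)
                  ∂((f s).prod (f s)))
            + t * φ 0) :
    ∀ t ≥ (0:ℝ), ∀ l > (0:ℝ),
      (∫⁻ x in Ioi (0:ℝ), ENNReal.ofReal (1 - Real.exp (-(l * x))) ∂(f t))
        = ENNReal.ofReal (Real.sqrt l * Real.tanh (Real.sqrt l * t)) := by
  intro t ht l hl
  have hf := IsFluxSolution.of_restrict_Ioi f hpos hmom heq
  rw [hf.lintegral_ofReal_bernsteinWeight hl.le ht, hf.bernsteinTransform_eq_sqrt_mul_tanh hl ht]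

/-- uniqueness part of Proposition 6.14 of the paper: for
the constant kernel `K ≡ 2` and zero initial data, any weak solution
`(f_t)_{t≥0}` of the coagulation equation with a unit flux of dust entering at
zero — i.e. every `f_t` has finite first moment, `t ↦ ∫ xφ(x) f_t(dx)` is
continuous for compactly supported continuous `φ`, and for all `C¹` compactly
supported `φ : [0,∞) → ℝ` and `t ≥ 0`,
`∫ xφ(x) f_t(dx) = ∫_0^t ∬ [(x+y)φ(x+y) − xφ(x) − yφ(y)] f_s(dx)f_s(dy) ds + t·φ(0)` —
has uniquely determined Bernstein transform:
`∫ (1 − e^{−λx}) f_t(dx) = √λ·tanh(√λ·t)` for all `t ≥ 0`, `λ > 0`. -/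
theorem constant_kernel_flux_solution_bernstein_transform
    (f : ℝ → Measure ℝ)
    (hpos : ∀ t ≥ (0:ℝ), (f t) (Iic 0) = 0)
    (hmom : ∀ t ≥ (0:ℝ), (∫⁻ x in Ioi (0:ℝ), ENNReal.ofReal x ∂(f t)) < ∞)
    (hcont : ∀ φ : ℝ → ℝ, Continuous φ → HasCompactSupport φ →
      tsupport φ ⊆ Ioi 0 →
      ContinuousOn (fun t => ∫ x in Ioi (0:ℝ), x * φ x ∂(f t)) (Ici 0))
    (heq : ∀ φ : ℝ → ℝ, ContDiff ℝ 1 φ → HasCompactSupport φ →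
      ∀ t ≥ (0:ℝ),
        (∫ x in Ioi (0:ℝ), x * φ x ∂(f t))
          = (∫ s in (0:ℝ)..t,
              ∫ p in (Ioi (0:ℝ)) ×ˢ (Ioi (0:ℝ)),
                ((p.1 + p.2) * φ (p.1 + p.2) - p.1 * φ p.1 - p.2 * φ p.2)
                  ∂((f s).prod (f s)))
            + t * φ 0) :
    ∀ t ≥ (0:ℝ), ∀ l > (0:ℝ),
      (∫⁻ x in Ioi (0:ℝ), ENNReal.ofReal (1 - Real.exp (-(l * x))) ∂(f t))
        = ENNReal.ofReal (Real.sqrt l * Real.tanh (Real.sqrt l * t)) :=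
  constant_kernel_flux_solution_bernstein_transform_general f hpos hmom heq
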